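/- arXiv:1812.04167 — 3 statements merged into one kernel-verified Lean document; each statement's English description precedes it below -/
import Mathlib

section
/- Let G be a finite group, N a subgroup of G, x ∈ G, and d a positive integer. Then o(x^d, N) = o(x, N) / gcd(d, o(x, N)); in particular, o(x^{o(x,N)}, N) = 1. -/
/-! `n(x, N)` is the period of `x` acting on the point `N` of `G ⧸ N`, so
`n(x ^ d, N) = n(x, N) / gcd(n(x, N), d)` as for any periodic point of a map, and this holds for
every conjugate `g⁻¹ * x * g` since conjugation commutes with powers. Writing
`a / gcd(a, d) = lcm(a, d) / d`, the formula passes through the gcd defining `o(x, N)` because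
`lcm` distributes over `gcd` (compare exponents of primes). -/

/-- `nOrd S x` is the smallest positive integer `k` such that `x ^ k ∈ S`. -/
noncomputable def nOrd {G : Type*} [Group G] (S : Set G) (x : G) : ℕ :=
  sInf {k : ℕ | 0 < k ∧ x ^ k ∈ S}

/-- `gOrd S x = gcd { nOrd S (g⁻¹ * x * g) : g ∈ G }`, the generalized order of `x`
with respect to `S`. -/
noncomputable def gOrd {G : Type*} [Group G] [Fintype G] (S : Set G) (x : G) : ℕ :=
  Finset.univ.gcd fun g : G => nOrd S (g⁻¹ * x * g)

theorem Nat.lcm_gcd_distrib_right (a b c : ℕ) :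
    lcm (gcd a b) c = gcd (lcm a c) (lcm b c) := by
  rcases eq_or_ne a 0 with rfl | ha
  · simp
  rcases eq_or_ne b 0 with rfl | hb
  · simp
  rcases eq_or_ne c 0 with rfl | hc
  · simp
  refine Nat.eq_of_factorization_eq (lcm_ne_zero (gcd_ne_zero_left ha) hc)
    (gcd_ne_zero_left (lcm_ne_zero ha hc)) fun p => ?_
  simp only [factorization_lcm (gcd_ne_zero_left ha) hc, factorization_gcd ha hb,
    factorization_gcd (lcm_ne_zero ha hc) (lcm_ne_zero hb hc), factorization_lcm ha hc,
    factorization_lcm hb hc, Finsupp.sup_apply, Finsupp.inf_apply]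
  exact sup_inf_right _ _ _

theorem Finset.lcm_gcd_distrib_right {ι : Type*} (s : Finset ι) (f : ι → ℕ) (c : ℕ) :
    Nat.lcm (s.gcd f) c = s.gcd fun i => Nat.lcm (f i) c := by
  classical
  induction s using Finset.induction_on with
  | empty => simp
  | insert i s hi ih =>
    rw [Finset.gcd_insert, Finset.gcd_insert, gcd_eq_nat_gcd, gcd_eq_nat_gcd,
      Nat.lcm_gcd_distrib_right, ih]

theorem Nat.div_gcd_mul_eq_lcm (a b : ℕ) : a / gcd a b * b = lcm a b :=
  Nat.div_mul_right_comm (gcd_dvd_left a b) b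

theorem Finset.gcd_div_gcd_right {ι : Type*} (s : Finset ι) (f : ι → ℕ) {c : ℕ} (hc : c ≠ 0) :
    (s.gcd fun i => f i / Nat.gcd (f i) c) = s.gcd f / Nat.gcd (s.gcd f) c := by
  refine Nat.eq_of_mul_eq_mul_right (Nat.pos_of_ne_zero hc) ?_
  rw [Nat.div_gcd_mul_eq_lcm, Finset.lcm_gcd_distrib_right, ← normalize_eq c,
    ← Finset.gcd_mul_right]
  simp only [normalize_eq, Nat.div_gcd_mul_eq_lcm]

theorem Subgroup.nOrd_eq_period {G : Type*} [Group G] (N : Subgroup G) (x : G) :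
    nOrd (N : Set G) x = MulAction.period x ((1 : G) : G ⧸ N) := by
  have hmem (k : ℕ) : x ^ k ∈ N ↔ x ^ k • ((1 : G) : G ⧸ N) = ((1 : G) : G ⧸ N) := by
    rw [MulAction.Quotient.smul_mk, smul_eq_mul, mul_one, QuotientGroup.eq, mul_one, inv_mem_iff]
  simp only [nOrd, MulAction.period_eq_minimalPeriod,
    Function.minimalPeriod_eq_sInf_n_pos_IsPeriodicPt, MulAction.isPeriodicPt_smul_iff,
    SetLike.mem_coe, hmem]

theorem Subgroup.nOrd_pow {G : Type*} [Group G] (N : Subgroup G) (x : G) {d : ℕ} (hd : d ≠ 0) :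
    nOrd (N : Set G) (x ^ d) = nOrd (N : Set G) x / Nat.gcd (nOrd (N : Set G) x) d := by
  rw [N.nOrd_eq_period, N.nOrd_eq_period, MulAction.period_eq_minimalPeriod,
    MulAction.period_eq_minimalPeriod, ← smul_iterate,
    Function.minimalPeriod_iterate_eq_div_gcd hd]

theorem Subgroup.nOrd_pos {G : Type*} [Group G] [Finite G] (N : Subgroup G) (x : G) :
    0 < nOrd (N : Set G) x := by
  rw [N.nOrd_eq_period]
  exact MulAction.period_pos_of_orderOf_pos (orderOf_pos x) _

theorem Subgroup.gOrd_pos {G : Type*} [Group G] [Fintype G] (N : Subgroup G) (x : G) :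
    0 < gOrd (N : Set G) x :=
  Nat.pos_of_ne_zero fun h =>
    (N.nOrd_pos _).ne' (Finset.gcd_eq_zero_iff.1 h 1 (Finset.mem_univ 1))

theorem Subgroup.gOrd_pow {G : Type*} [Group G] [Fintype G] (N : Subgroup G) (x : G) {d : ℕ}
    (hd : d ≠ 0) :
    gOrd (N : Set G) (x ^ d) = gOrd (N : Set G) x / Nat.gcd (gOrd (N : Set G) x) d := by
  have hconj (g : G) : g⁻¹ * x ^ d * g = (g⁻¹ * x * g) ^ d := by
    simpa using (conj_pow (a := g⁻¹)).symm
  simp only [gOrd, hconj, N.nOrd_pow _ hd]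
  exact Finset.gcd_div_gcd_right _ _ hd

theorem stmt7 {G : Type*} [Group G] [Fintype G] (N : Subgroup G) (x : G)
    (d : ℕ) (hd : 0 < d) :
    gOrd (N : Set G) (x ^ d) = gOrd (N : Set G) x / Nat.gcd d (gOrd (N : Set G) x) ∧
      gOrd (N : Set G) (x ^ gOrd (N : Set G) x) = 1 := by
  have hm := N.gOrd_pos x
  refine ⟨by rw [N.gOrd_pow x hd.ne', Nat.gcd_comm], ?_⟩
  rw [N.gOrd_pow x hm.ne', Nat.gcd_self, Nat.div_self hm]
end

section
/- Let G be a finite group, let π be a set of primes, and let N be a Hall π-subgroup of G (i.e., |N| is a π-number and [G:N] is coprime to every prime in π). Assume that any two Hall π-subgroups of G are conjugate in G. Then for every x ∈ G, o(x, N) equals the order of the element x^{|N|}. -/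
open scoped Pointwise

/-- `H` is a Hall `π`-subgroup: `|H|` is a `π`-number and the index `[G:H]` is coprime
to every prime in `π`. -/
def IsHallPi {G : Type*} [Group G] (π : Set ℕ) (H : Subgroup G) : Prop :=
  (∀ p : ℕ, p.Prime → p ∣ Nat.card H → p ∈ π) ∧
    (∀ p ∈ π, p.Prime → ¬ p ∣ H.index)

private lemma nOrd_spec {G : Type*} [Group G] [Fintype G] (N : Subgroup G) (y : G) :
    0 < nOrd (N : Set G) y ∧ y ^ nOrd (N : Set G) y ∈ N := by
  have hne : orderOf y ∈ {k : ℕ | 0 < k ∧ y ^ k ∈ (N : Set G)} :=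
    ⟨orderOf_pos y, by simpa [pow_orderOf_eq_one] using N.one_mem⟩
  exact Nat.sInf_mem ⟨_, hne⟩

private lemma nOrd_dvd {G : Type*} [Group G] [Fintype G] (N : Subgroup G) (y : G)
    {k : ℕ} (hk : 0 < k) (hmem : y ^ k ∈ N) : nOrd (N : Set G) y ∣ k := by
  obtain ⟨ht, hyt⟩ := nOrd_spec N y
  set t := nOrd (N : Set G) y with htdef
  have hr : y ^ (k % t) ∈ N := by
    have hEq : y ^ (k % t) = ((y ^ t) ^ (k / t))⁻¹ * y ^ k := by
      rw [eq_inv_mul_iff_mul_eq, ← pow_mul, ← pow_add, Nat.div_add_mod]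
    rw [hEq]
    exact N.mul_mem (N.inv_mem (N.pow_mem hyt _)) hmem
  rcases Nat.eq_zero_or_pos (k % t) with h0 | hp
  · exact Nat.dvd_of_mod_eq_zero h0
  · have hle : t ≤ k % t := Nat.sInf_le ⟨hp, hr⟩
    have := Nat.mod_lt k ht
    omega

private lemma inv_conj_pow {G : Type*} [Group G] (g x : G) (m : ℕ) :
    (g⁻¹ * x * g) ^ m = g⁻¹ * x ^ m * g := by
  have := conj_pow (a := g⁻¹) (b := x) (i := m)
  rwa [inv_inv] at this

theorem stmt8 {G : Type*} [Group G] [Fintype G] (π : Set ℕ) (N : Subgroup G)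
    (hN : IsHallPi π N)
    (hconj : ∀ K : Subgroup G, IsHallPi π K → ∃ g : G, MulAut.conj g • N = K)
    (x : G) :
    gOrd (N : Set G) x = orderOf (x ^ Nat.card N) := by
  classical
  set n := Nat.card N with hn
  set i := N.index with hi
  set o := orderOf x with ho
  have hn0 : 0 < n := Nat.card_pos
  have hi0 : 0 < i := Nat.pos_of_ne_zero N.index_ne_zero_of_finite
  have ho0 : 0 < o := orderOf_pos x
  have hcop : Nat.Coprime n i := by
    by_contra h
    have hg0 : Nat.gcd n i ≠ 1 := h
    have hpp : (Nat.gcd n i).minFac.Prime := Nat.minFac_prime hg0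
    have hpg : (Nat.gcd n i).minFac ∣ Nat.gcd n i := Nat.minFac_dvd _
    exact hN.2 _ (hN.1 _ hpp (hpg.trans (Nat.gcd_dvd_left _ _))) hpp
      (hpg.trans (Nat.gcd_dvd_right _ _))
  have honi : o ∣ n * i := by
    rw [hn, hi, Subgroup.card_mul_index]
    exact orderOf_dvd_natCard x
  set d := Nat.gcd o n with hd
  have hdo : d ∣ o := Nat.gcd_dvd_left _ _
  have hdn : d ∣ n := Nat.gcd_dvd_right _ _
  have hd0 : 0 < d := Nat.gcd_pos_of_pos_left _ ho0
  set b := o / d with hb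
  have hdb : d * b = o := Nat.mul_div_cancel' hdo
  have hbord : orderOf (x ^ n) = b := by
    rw [orderOf_pow, ← ho, ← hd, ← hb]
  -- b is coprime to n
  have hbn : Nat.Coprime b n := by
    rw [Nat.coprime_comm]
    by_contra h
    have hg0 : Nat.gcd n b ≠ 1 := h
    set p := (Nat.gcd n b).minFac with hpdef
    have hpp : p.Prime := Nat.minFac_prime hg0
    have hpg : p ∣ Nat.gcd n b := Nat.minFac_dvd _
    have hpn : p ∣ n := hpg.trans (Nat.gcd_dvd_left _ _)
    have hpb : p ∣ b := hpg.trans (Nat.gcd_dvd_right _ _)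
    have hpi : ¬ p ∣ i := hN.2 p (hN.1 p hpp hpn) hpp
    have hpdo : p * d ∣ o := by
      obtain ⟨c, hc⟩ := hpb
      exact ⟨c, by rw [← hdb, hc]; ring⟩
    have hcopdi : Nat.Coprime d i := Nat.Coprime.coprime_dvd_left hdn hcop
    have hcoppi : Nat.Coprime p i := (Nat.Prime.coprime_iff_not_dvd hpp).mpr hpi
    have hcoppdi : Nat.Coprime (p * d) i := Nat.Coprime.mul hcoppi hcopdi
    have hpdn : p * d ∣ n := hcoppdi.dvd_of_dvd_mul_right (hpdo.trans honi)
    have hpdd : p * d ∣ d := Nat.dvd_gcd hpdo hpdn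
    have := Nat.le_of_dvd hd0 hpdd
    have := hpp.two_le
    nlinarith
  -- every generalized order value is divisible by b
  have hstep1 : ∀ g : G, b ∣ nOrd (N : Set G) (g⁻¹ * x * g) := by
    intro g
    set y := g⁻¹ * x * g with hy
    obtain ⟨hk0, hkmem⟩ := nOrd_spec N y
    set k := nOrd (N : Set G) y with hk
    have hykn : y ^ (k * n) = 1 := by
      have h1 : orderOf (y ^ k) ∣ n := by
        have := orderOf_dvd_natCard (⟨y ^ k, hkmem⟩ : N)
        rwa [Subgroup.orderOf_mk] at this
      rw [pow_mul]
      exact orderOf_dvd_iff_pow_eq_one.mp h1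
    have hxkn : x ^ (k * n) = 1 := by
      have := hykn
      rw [hy, inv_conj_pow] at this
      have h2 : x ^ (k * n) = g * (g⁻¹ * x ^ (k * n) * g) * g⁻¹ := by group
      rw [h2, this]; group
    have hokn : o ∣ k * n := orderOf_dvd_of_pow_eq_one hxkn
    obtain ⟨m, hm⟩ := hdn
    have hbkm : b ∣ k * m := by
      have h3 : d * b ∣ d * (k * m) := by
        rw [hdb]
        calc o ∣ k * n := hokn
          _ = d * (k * m) := by rw [hm]; ring
      exact (Nat.mul_dvd_mul_iff_left hd0).mp h3
    have hcopbm : Nat.Coprime b m := hbn.coprime_dvd_right ⟨d, by rw [hm]; ring⟩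
    exact hcopbm.dvd_of_dvd_mul_right hbkm
  have hbG : b ∣ gOrd (N : Set G) x :=
    Finset.dvd_gcd fun g _ => hstep1 g
  -- gOrd divides o
  have hGo : gOrd (N : Set G) x ∣ o := by
    have h1 : gOrd (N : Set G) x ∣ nOrd (N : Set G) ((1 : G)⁻¹ * x * 1) :=
      Finset.gcd_dvd (Finset.mem_univ 1)
    have h2 : nOrd (N : Set G) ((1 : G)⁻¹ * x * 1) ∣ o := by
      have hx1 : ((1 : G)⁻¹ * x * 1) = x := by group
      rw [hx1]
      apply nOrd_dvd N x ho0
      have hxo : x ^ o = 1 := by rw [ho]; exact pow_orderOf_eq_one x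
      rw [hxo]; exact N.one_mem
    exact h1.trans h2
  -- Sylow argument: for every prime p dividing n there is a conjugate whose nOrd
  -- is not divisible by p
  have key : ∀ p : ℕ, p.Prime → p ∣ n → ∃ g : G, ¬ p ∣ nOrd (N : Set G) (g⁻¹ * x * g) := by
    intro p hp hpn
    haveI : Fact p.Prime := ⟨hp⟩
    set m := o / p ^ o.factorization p with hmdef
    have hm0 : 0 < m := Nat.ordCompl_pos p ho0.ne'
    have hmdvd : m ∣ o := Nat.ordCompl_dvd o p
    have hxm : orderOf (x ^ m) = p ^ o.factorization p := by
      rw [orderOf_pow, ← ho, Nat.gcd_eq_right hmdvd, hmdef,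
        Nat.div_div_self (Nat.ordProj_dvd o p) ho0.ne']
    have hpgrp : IsPGroup p (Subgroup.zpowers (x ^ m)) := by
      apply IsPGroup.of_card
      rw [Nat.card_zpowers, hxm]
    obtain ⟨Q, hQ⟩ := hpgrp.exists_le_sylow
    -- a Sylow p-subgroup of G contained in N
    let S : Sylow p N := default
    set H : Subgroup G := Subgroup.map N.subtype S with hHdef
    have hHN : H ≤ N := Subgroup.map_subtype_le _
    have hHcard : Nat.card H = p ^ (Nat.card G).factorization p := by
      have h1 : Nat.card H = Nat.card S :=
        (Nat.card_congr (Subgroup.equivMapOfInjective _ _ N.subtype_injective).toEquiv).symm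
      have hGni : Nat.card G = n * i := (Subgroup.card_mul_index N).symm
      have hpi : ¬ p ∣ i := hN.2 p (hN.1 p hp hpn) hp
      have hfac : (Nat.card G).factorization p = (Nat.card N).factorization p := by
        rw [hGni, Nat.factorization_mul hn0.ne' hi0.ne']
        simp [Nat.factorization_eq_zero_of_not_dvd hpi, hn, Nat.card_eq_fintype_card]
      rw [h1, S.card_eq_multiplicity, hfac]
    set R : Sylow p G := Sylow.ofCard H hHcard with hRdef
    obtain ⟨g, hg⟩ := MulAction.exists_smul_eq G R Q
    refine ⟨g, ?_⟩
    have hxmQ : x ^ m ∈ Q := hQ (Subgroup.mem_zpowers _)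
    have hQeq : (Q : Subgroup G) = MulAut.conj g • (R : Subgroup G) := by
      rw [← hg, Sylow.smul_def, Sylow.pointwise_smul_def]
    have hmemR : (g⁻¹ * x * g) ^ m ∈ (R : Subgroup G) := by
      have hxmQ' : x ^ m ∈ (Q : Subgroup G) := hxmQ
      rw [hQeq] at hxmQ'
      have := Subgroup.mem_pointwise_smul_iff_inv_smul_mem.mp hxmQ'
      simpa [MulAut.smul_def, MulAut.conj_inv_apply] using this
    have hmemN : (g⁻¹ * x * g) ^ m ∈ N :=
      hHN (by rwa [hRdef, Sylow.coe_ofCard] at hmemR)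
    have hdvd : nOrd (N : Set G) (g⁻¹ * x * g) ∣ m := nOrd_dvd N _ hm0 hmemN
    intro hpdvd
    exact Nat.not_dvd_ordCompl hp ho0.ne' (hpdvd.trans hdvd)
  -- gOrd is coprime to d
  have hcopGd : Nat.Coprime (gOrd (N : Set G) x) d := by
    by_contra h
    have hg0 : Nat.gcd (gOrd (N : Set G) x) d ≠ 1 := h
    set p := (Nat.gcd (gOrd (N : Set G) x) d).minFac with hpdef
    have hpp : p.Prime := Nat.minFac_prime hg0
    have hpg : p ∣ Nat.gcd (gOrd (N : Set G) x) d := Nat.minFac_dvd _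
    have hpG : p ∣ gOrd (N : Set G) x := hpg.trans (Nat.gcd_dvd_left _ _)
    have hpd : p ∣ d := hpg.trans (Nat.gcd_dvd_right _ _)
    obtain ⟨g, hgnd⟩ := key p hpp (hpd.trans hdn)
    exact hgnd (hpG.trans (Finset.gcd_dvd (Finset.mem_univ g)))
  have hGb : gOrd (N : Set G) x ∣ b := by
    have h1 : gOrd (N : Set G) x ∣ d * b := hdb ▸ hGo
    exact hcopGd.dvd_of_dvd_mul_left h1
  rw [hbord]
  exact Nat.dvd_antisymm hGb hbG
end

section
/- Let G be a finite group and N a subgroup of G. Then for every x ∈ G, o_N(x) divides the index [G : N]. -/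
open scoped Classical in
/-- `oSub N x = gcd { gOrd N (x * m) : m ∈ N }`. -/
noncomputable def oSub {G : Type*} [Group G] [Fintype G] (N : Subgroup G) (x : G) : ℕ :=
  Finset.univ.gcd fun m : N => gOrd (N : Set G) (x * (m : G))

/-! The cyclic group `⟨x⟩` permutes the cosets of `N`, and the orbit of `gN` has length
`n(g⁻¹xg, N)`, since `xᵏgN = gN ↔ (g⁻¹xg)ᵏ ∈ N`. Hence `[G : N]` is a sum of such numbers,
each divisible by `o(x, N)`, and `o_N(x) ∣ o(x, N)` by taking `m = 1`. -/

open MulAction Function Subgroup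

lemma conj_pow_mem_iff_smul_coe_eq {G : Type*} [Group G] (N : Subgroup G) (x g : G) (k : ℕ) :
    (g⁻¹ * x * g) ^ k ∈ N ↔ x ^ k • (g : G ⧸ N) = g := by
  have hconj : (g⁻¹ * x * g) ^ k = g⁻¹ * x ^ k * g := by
    simpa using conj_pow (a := g⁻¹) (b := x) (i := k)
  rw [hconj, Quotient.smul_coe, smul_eq_mul, eq_comm, QuotientGroup.eq, mul_assoc]

lemma nOrd_conj_eq_minimalPeriod {G : Type*} [Group G] (N : Subgroup G) (x g : G) :
    nOrd (N : Set G) (g⁻¹ * x * g) = minimalPeriod (x • ·) (g : G ⧸ N) := by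
  simp only [nOrd, minimalPeriod_eq_sInf_n_pos_IsPeriodicPt, isPeriodicPt_smul_iff,
    SetLike.mem_coe, conj_pow_mem_iff_smul_coe_eq, gt_iff_lt]

lemma gOrd_dvd_minimalPeriod {G : Type*} [Group G] [Fintype G] (N : Subgroup G) (x : G)
    (q : G ⧸ N) : gOrd (N : Set G) x ∣ minimalPeriod (x • ·) q := by
  rw [← q.out_eq, ← nOrd_conj_eq_minimalPeriod]
  exact Finset.gcd_dvd (Finset.mem_univ _)

lemma gOrd_dvd_index {G : Type*} [Group G] [Fintype G] (N : Subgroup G) (x : G) :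
    gOrd (N : Set G) x ∣ N.index := by
  classical
  rw [index_eq_sum_minimalPeriod N x]
  exact Finset.dvd_sum fun q _ => gOrd_dvd_minimalPeriod N x q.out

lemma oSub_dvd_gOrd {G : Type*} [Group G] [Fintype G] (N : Subgroup G) (x : G) :
    oSub N x ∣ gOrd (N : Set G) x := by
  classical
  simpa [oSub] using Finset.gcd_dvd (f := fun m : N => gOrd (N : Set G) (x * m))
    (Finset.mem_univ 1)

theorem stmt14 {G : Type*} [Group G] [Fintype G] (N : Subgroup G) (x : G) :
    oSub N x ∣ N.index :=
  (oSub_dvd_gOrd N x).trans (gOrd_dvd_index N x)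
end
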